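/- For a ∈ [1/2,1], the function D_{(a)} defined by D_{(a)}(u,v) = min(u, v, (1−a)(u+v)) if u+v ≤ 1 and D_{(a)}(u,v) = min(u, v, a(u+v)+1−2a) if u+v ≥ 1, is a 2-copula. -/

import Mathlib

/-!
For `a ≥ 1/2` the two affine pieces of `D_{(a)}` glue to a maximum, so
`D_{(a)}(u, v) = min(u, v, f(u + v))` with `f(s) = max((1 - a)s, as + 1 - 2a)`.
As `0 ≤ 1 - a ≤ a ≤ 1`, `f` is convex, nondecreasing and 1-Lipschitz. Convexity makes
`(u, v) ↦ f(u + v)` 2-increasing, and taking the minimum with a coordinate preserves the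
2-increasing property as long as the function grows in that coordinate no faster than the
coordinate itself, which the Lipschitz bound guarantees at both steps.
-/

open Set

/-- A 2-copula on [0,1]². -/
def IsCopula2 (C : ℝ → ℝ → ℝ) : Prop :=
  (∀ u ∈ Set.Icc (0:ℝ) 1, ∀ v ∈ Set.Icc (0:ℝ) 1, C u v ∈ Set.Icc (0:ℝ) 1) ∧
  (∀ u ∈ Set.Icc (0:ℝ) 1, C u 0 = 0 ∧ C 0 u = 0 ∧ C u 1 = u ∧ C 1 u = u) ∧
  (∀ u ∈ Set.Icc (0:ℝ) 1, ∀ u' ∈ Set.Icc (0:ℝ) 1, ∀ v ∈ Set.Icc (0:ℝ) 1, ∀ v' ∈ Set.Icc (0:ℝ) 1,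
    u ≤ u' → v ≤ v' → 0 ≤ C u' v' - C u' v - C u v' + C u v)

/-- The one-parameter family D_{(a)}. -/
noncomputable def Da (a u v : ℝ) : ℝ :=
  if u + v ≤ 1 then min u (min v ((1 - a) * (u + v)))
  else min u (min v (a * (u + v) + 1 - 2*a))

def rectVol (C : ℝ → ℝ → ℝ) (u u' v v' : ℝ) : ℝ :=
  C u' v' - C u' v - C u v' + C u v

lemma rectVol_swap (C : ℝ → ℝ → ℝ) (u u' v v' : ℝ) :
    rectVol (fun x y => C y x) v v' u u' = rectVol C u u' v v' := by
  unfold rectVol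
  ring

-- As `min x (g x y) = x + min (g x y - x) 0`, this says that the concave nondecreasing map
-- `min · 0` sends a longer interval starting further left to a longer interval.
lemma rectVol_min_left_nonneg {g : ℝ → ℝ → ℝ} {u u' v v' : ℝ}
    (hvol : 0 ≤ rectVol g u u' v v') (hmono : g u v ≤ g u v')
    (hlip : g u' v - g u v ≤ u' - u) (hlip' : g u' v' - g u v' ≤ u' - u) :
    0 ≤ rectVol (fun x y => min x (g x y)) u u' v v' := by
  unfold rectVol at *
  rcases min_cases u' (g u' v') with ⟨h₁, _⟩ | ⟨h₁, _⟩ <;>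
  rcases min_cases u' (g u' v) with ⟨h₂, _⟩ | ⟨h₂, _⟩ <;>
  rcases min_cases u (g u v') with ⟨h₃, _⟩ | ⟨h₃, _⟩ <;>
  rcases min_cases u (g u v) with ⟨h₄, _⟩ | ⟨h₄, _⟩ <;>
  simp only [h₁, h₂, h₃, h₄] <;> linarith

lemma rectVol_min_right_nonneg {g : ℝ → ℝ → ℝ} {u u' v v' : ℝ}
    (hvol : 0 ≤ rectVol g u u' v v') (hmono : g u v ≤ g u' v)
    (hlip : g u v' - g u v ≤ v' - v) (hlip' : g u' v' - g u' v ≤ v' - v) :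
    0 ≤ rectVol (fun x y => min y (g x y)) u u' v v' := by
  rw [← rectVol_swap] at hvol ⊢
  exact rectVol_min_left_nonneg hvol hmono hlip hlip'

lemma min_sub_min_le_sub (c : ℝ) {a b : ℝ} (hab : a ≤ b) : min c b - min c a ≤ b - a := by
  rcases le_total c a with h | h
  · rw [min_eq_left h, min_eq_left (h.trans hab)]
    linarith
  · rw [min_eq_right h]
    linarith [min_le_right c b]

theorem rectVol_min_min_add_nonneg {f : ℝ → ℝ} (hmono : Monotone f)
    (hlip : ∀ ⦃s t⦄, s ≤ t → f t - f s ≤ t - s)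
    (hconv : ∀ ⦃s t⦄, s ≤ t → ∀ ⦃h⦄, 0 ≤ h → f (s + h) - f s ≤ f (t + h) - f t)
    {u u' v v' : ℝ} (hu : u ≤ u') (hv : v ≤ v') :
    0 ≤ rectVol (fun x y => min x (min y (f (x + y)))) u u' v v' := by
  have hsum : 0 ≤ rectVol (fun x y => f (x + y)) u u' v v' := by
    have := hconv (by linarith : u + v ≤ u' + v) (sub_nonneg.2 hv)
    rw [show u + v + (v' - v) = u + v' by ring, show u' + v + (v' - v) = u' + v' by ring] at this
    simp only [rectVol]
    linarith
  have hmin : 0 ≤ rectVol (fun x y => min y (f (x + y))) u u' v v' :=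
    rectVol_min_right_nonneg hsum (hmono (by linarith))
      (by linarith [hlip (by linarith : u + v ≤ u + v')])
      (by linarith [hlip (by linarith : u' + v ≤ u' + v')])
  refine rectVol_min_left_nonneg hmin (min_le_min hv (hmono (by linarith))) ?_ ?_
  · linarith [min_sub_min_le_sub v (hmono (by linarith : u + v ≤ u' + v)),
      hlip (by linarith : u + v ≤ u' + v)]
  · linarith [min_sub_min_le_sub v' (hmono (by linarith : u + v' ≤ u' + v')),
      hlip (by linarith : u + v' ≤ u' + v')]

noncomputable def DaDiag (a s : ℝ) : ℝ := max ((1 - a) * s) (a * s + 1 - 2 * a)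

section DaDiag

variable {a : ℝ}

-- `(a s + 1 - 2a) - (1 - a) s = (2a - 1)(s - 1)`, so the maximum switches pieces at `s = 1`.
lemma Da_eq_min_DaDiag (ha : 1/2 ≤ a) (u v : ℝ) : Da a u v = min u (min v (DaDiag a (u + v))) := by
  unfold Da DaDiag
  split_ifs
  · rw [max_eq_left (by nlinarith)]
  · rw [max_eq_right (by nlinarith)]

lemma DaDiag_monotone (h₀ : 0 ≤ a) (h₁ : a ≤ 1) : Monotone (DaDiag a) := fun _ _ hst =>
  max_le_max (by nlinarith) (by nlinarith)

lemma DaDiag_sub_le (h₀ : 0 ≤ a) (h₁ : a ≤ 1) {s t : ℝ} (hst : s ≤ t) :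
    DaDiag a t - DaDiag a s ≤ t - s :=
  (max_sub_max_le_max _ _ _ _).trans (max_le (by nlinarith) (by nlinarith))

lemma DaDiag_add_sub_le (ha : 1/2 ≤ a) {s t : ℝ} (hst : s ≤ t) {h : ℝ} (hh : 0 ≤ h) :
    DaDiag a (s + h) - DaDiag a s ≤ DaDiag a (t + h) - DaDiag a t := by
  have hh' : 0 ≤ (2 * a - 1) * h := mul_nonneg (by linarith) hh
  have hst' : 0 ≤ (2 * a - 1) * (t - s) := mul_nonneg (by linarith) (sub_nonneg.2 hst)
  unfold DaDiag
  simp only [max_def]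
  split_ifs <;> linarith

lemma DaDiag_nonneg (h₁ : a ≤ 1) {s : ℝ} (hs : 0 ≤ s) : 0 ≤ DaDiag a s :=
  le_max_of_le_left (mul_nonneg (by linarith) hs)

lemma le_DaDiag_add_one (h₁ : a ≤ 1) {u : ℝ} (hu : u ≤ 1) : u ≤ DaDiag a (u + 1) :=
  le_max_of_le_right (by nlinarith)

end DaDiag

/-- For a ∈ [1/2,1], the function D_{(a)} is a 2-copula. -/
theorem Da_isCopula2 (a : ℝ) (ha : a ∈ Icc (1/2 : ℝ) 1) : IsCopula2 (Da a) := by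
  obtain ⟨ha₁, ha₂⟩ := ha
  have ha₀ : 0 ≤ a := by linarith
  simp only [IsCopula2, Da_eq_min_DaDiag ha₁]
  refine ⟨?_, ?_, ?_⟩
  · rintro u ⟨hu₀, hu₁⟩ v ⟨hv₀, -⟩
    exact ⟨le_min hu₀ (le_min hv₀ (DaDiag_nonneg ha₂ (by linarith))), (min_le_left _ _).trans hu₁⟩
  · rintro u ⟨hu₀, hu₁⟩
    have hf := DaDiag_nonneg ha₂ hu₀
    have hg := le_DaDiag_add_one ha₂ hu₁
    simp [hu₀, hu₁, hf, hg, add_comm]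
  · intro u _ u' _ v _ v' _ hu hv
    exact rectVol_min_min_add_nonneg (DaDiag_monotone ha₀ ha₂) (fun _ _ => DaDiag_sub_le ha₀ ha₂)
      (fun _ _ hst _ hh => DaDiag_add_sub_le ha₁ hst hh) hu hv
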